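/- For every continuous function f : ℝ → ℝ, the set L_f^∞ = {x ∈ ℝ : Lip f(x) = ∞} is a G_δ set. -/

import Mathlib

open Set Filter MeasureTheory Topology
open scoped ENNReal NNReal

/-- `M_f(x,r) = sup { |f(x)-f(y)|/r : |x-y| ≤ r }`, valued in `[0,∞]`. -/
noncomputable def Mf (f : ℝ → ℝ) (x r : ℝ) : ℝ≥0∞ :=
  ⨆ y ∈ {y : ℝ | |x - y| ≤ r}, ENNReal.ofReal (|f x - f y| / r)

/-- The big Lip function: `Lip f(x) = limsup_{r→0⁺} M_f(x,r)`. -/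
noncomputable def bigLip (f : ℝ → ℝ) (x : ℝ) : ℝ≥0∞ :=
  Filter.limsup (fun r => Mf f x r) (𝓝[>] (0 : ℝ))

/-- The little lip function: `lip f(x) = liminf_{r→0⁺} M_f(x,r)`. -/
noncomputable def litLip (f : ℝ → ℝ) (x : ℝ) : ℝ≥0∞ :=
  Filter.liminf (fun r => Mf f x r) (𝓝[>] (0 : ℝ))

/-- A set `E ⊆ ℝ` is trim if `λ(E ∩ (a,b)) < b - a` for every open interval `(a,b)`. -/
def Trim (E : Set ℝ) : Prop :=
  ∀ a b : ℝ, a < b → volume (E ∩ Ioo a b) < ENNReal.ofReal (b - a)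

/-! For continuous `f` and fixed `r > 0`, the supremum defining `M_f(x,r)` may be taken over the
open ball, which makes `x ↦ M_f(x,r)` lower semicontinuous. Hence `{Lip f = ∞}` is the countable
intersection, over `n` and `k`, of the open sets `⋃_{0 < r < 1/(k+1)} {M_f(·,r) > n}`. -/

theorem ENNReal.limsup_eq_top_iff {α : Type*} {l : Filter α} {u : α → ℝ≥0∞} :
    limsup u l = ⊤ ↔ ∀ n : ℕ, ∃ᶠ a in l, (n : ℝ≥0∞) < u a := by
  refine ⟨fun h n => frequently_lt_of_lt_limsup (by isBoundedDefault) (h ▸ natCast_lt_top n),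
    fun h => ?_⟩
  by_contra hne
  obtain ⟨n, hn⟩ := ENNReal.exists_nat_gt hne
  exact hn.not_ge <| le_limsup_of_frequently_le ((h n).mono fun _ => le_of_lt) (by isBoundedDefault)

variable {f : ℝ → ℝ} {x r : ℝ}

theorem coe_lt_Mf_iff (hr : 0 < r) {c : ℝ≥0} :
    (c : ℝ≥0∞) < Mf f x r ↔ ∃ y, |x - y| ≤ r ∧ c * r < |f x - f y| := by
  simp only [Mf, mem_ofPred_eq, lt_iSup_iff, exists_prop, ← ENNReal.ofReal_coe_nnreal]
  refine exists_congr fun y => and_congr_right fun _ => ?_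
  rw [ENNReal.ofReal_lt_ofReal_iff_of_nonneg c.coe_nonneg, lt_div_iff₀ hr]

theorem coe_lt_Mf_iff_of_continuous (hf : Continuous f) (hr : 0 < r) {c : ℝ≥0} :
    (c : ℝ≥0∞) < Mf f x r ↔ ∃ y ∈ Metric.ball x r, c * r < |f x - f y| := by
  have hopen : IsOpen {y | c * r < |f x - f y|} :=
    isOpen_lt continuous_const (by fun_prop)
  have hclosed : {y | |x - y| ≤ r} = closure (Metric.ball x r) := by
    ext y
    rw [closure_ball x hr.ne', Metric.mem_closedBall, Real.dist_eq, abs_sub_comm, mem_ofPred_eq]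
  rw [coe_lt_Mf_iff hr]
  have := closure_inter_open_nonempty_iff (s := Metric.ball x r) hopen
  rw [← hclosed] at this
  simpa only [Set.Nonempty, mem_inter_iff, mem_ofPred_eq] using this

theorem lowerSemicontinuous_Mf (hf : Continuous f) (hr : 0 < r) :
    LowerSemicontinuous (fun x => Mf f x r) := by
  refine lowerSemicontinuous_iff_isOpen_preimage.2 fun c => ?_
  induction c using ENNReal.recTopCoe with
  | top => simp
  | coe c =>
    have : (fun x => Mf f x r) ⁻¹' Ioi (c : ℝ≥0∞) =
        ⋃ y, Metric.ball y r ∩ {x | c * r < |f x - f y|} := by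
      ext x
      simp only [mem_preimage, mem_Ioi, coe_lt_Mf_iff_of_continuous hf hr, mem_iUnion,
        mem_inter_iff, mem_ofPred_eq, Metric.mem_ball_comm (x := x)]
    rw [this]
    exact isOpen_iUnion fun y => Metric.isOpen_ball.inter (isOpen_lt continuous_const (by fun_prop))

theorem bigLip_eq_top_iff : bigLip f x = ⊤ ↔
    ∀ n k : ℕ, ∃ r ∈ Metric.ball 0 (1 / (k + 1)) ∩ Ioi 0, (n : ℝ≥0∞) < Mf f x r := by
  have hbasis := nhdsWithin_hasBasis (Metric.nhds_basis_ball_inv_nat_succ (x := (0 : ℝ))) (Ioi 0)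
  simp only [bigLip, ENNReal.limsup_eq_top_iff, hbasis.frequently_iff, true_implies]

theorem isGdelta_Lip_infinite_set (f : ℝ → ℝ) (hf : Continuous f) :
    IsGδ {x : ℝ | bigLip f x = ⊤} := by
  have hlevel : {x : ℝ | bigLip f x = ⊤} = ⋂ (n : ℕ) (k : ℕ),
      ⋃ r ∈ Metric.ball 0 (1 / (k + 1)) ∩ Ioi 0, {x | (n : ℝ≥0∞) < Mf f x r} := by
    ext x
    simp only [mem_ofPred_eq, bigLip_eq_top_iff, mem_iInter, mem_iUnion, exists_prop]
  rw [hlevel]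
  exact .iInter fun n => .iInter fun k => IsOpen.isGδ <|
    isOpen_biUnion fun r hr => (lowerSemicontinuous_Mf hf hr.2).isOpen_preimage n
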